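/- Let G be a connected triangle-free graph with no full star-cutset. Then G has no cut-vertex of degree at least 3. Moreover, if G is not a path on at most 4 vertices, then every vertex of G has degree at least 2. -/

import Mathlib

/-! ## Frames and restricted frame graphs -/

/-- An axis-parallel box in `ℝ²`, i.e. a product `[x1,x2] × [y1,y2]` of two closed
nondegenerate intervals. -/
structure Box : Type where
  x1 : ℝ
  x2 : ℝ
  y1 : ℝ
  y2 : ℝ
  hx : x1 < x2
  hy : y1 < y2

namespace Box

/-- The region bounded by the frame of a box: the closed box itself. -/
def region (B : Box) : Set (ℝ × ℝ) :=
  {p : ℝ × ℝ | B.x1 ≤ p.1 ∧ p.1 ≤ B.x2 ∧ B.y1 ≤ p.2 ∧ p.2 ≤ B.y2}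

/-- The frame of a box: the topological boundary of the closed box. -/
def frame (B : Box) : Set (ℝ × ℝ) :=
  {p : ℝ × ℝ | p ∈ B.region ∧ (p.1 = B.x1 ∨ p.1 = B.x2 ∨ p.2 = B.y1 ∨ p.2 = B.y2)}

/-- The left side `{x1} × [y1,y2]` of a frame. -/
def leftSide (B : Box) : Set (ℝ × ℝ) :=
  {p : ℝ × ℝ | p.1 = B.x1 ∧ B.y1 ≤ p.2 ∧ p.2 ≤ B.y2}

/-- The right side `{x2} × [y1,y2]` of a frame. -/
def rightSide (B : Box) : Set (ℝ × ℝ) :=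
  {p : ℝ × ℝ | p.1 = B.x2 ∧ B.y1 ≤ p.2 ∧ p.2 ≤ B.y2}

/-- The top side `[x1,x2] × {y2}` of a frame. -/
def topSide (B : Box) : Set (ℝ × ℝ) :=
  {p : ℝ × ℝ | p.2 = B.y2 ∧ B.x1 ≤ p.1 ∧ p.1 ≤ B.x2}

/-- The bottom side `[x1,x2] × {y1}` of a frame. -/
def bottomSide (B : Box) : Set (ℝ × ℝ) :=
  {p : ℝ × ℝ | p.2 = B.y1 ∧ B.x1 ≤ p.1 ∧ p.1 ≤ B.x2}

/-- The four corners of a frame. -/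
def corners (B : Box) : Set (ℝ × ℝ) :=
  {(B.x1, B.y1), (B.x1, B.y2), (B.x2, B.y1), (B.x2, B.y2)}

/-- `Box.Inside inner outer` : the frame of `outer` contains the frame of `inner`,
i.e. the two frames are disjoint and the frame of `inner` is contained in the region
bounded by the frame of `outer`. -/
def Inside (inner outer : Box) : Prop :=
  inner.frame ∩ outer.frame = ∅ ∧ inner.frame ⊆ outer.region

/-- `Box.Outside B outer` : the frames are disjoint and `B` is not inside `outer`. -/
def Outside (B outer : Box) : Prop :=
  B.frame ∩ outer.frame = ∅ ∧ ¬ Inside B outer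

end Box

/-- A family of frames `(F v)` is a representation of the graph `G` as a restricted
frame graph: distinct vertices are adjacent iff their frames intersect, and the four
restrictions on the representation hold. -/
structure IsFrameRepresentation {V : Type} (G : SimpleGraph V) (F : V → Box) : Prop where
  /-- Distinct vertices are adjacent iff their frames intersect. -/
  adj_iff : ∀ u v : V, u ≠ v → (G.Adj u v ↔ ((F u).frame ∩ (F v).frame).Nonempty)
  /-- (1) Corners of a frame do not coincide with any point of another frame. -/
  corner_free : ∀ u v : V, u ≠ v → (F u).corners ∩ (F v).frame = ∅
  /-- (2) The left side of a frame does not intersect any other frame. -/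
  left_free : ∀ u v : V, u ≠ v → (F u).leftSide ∩ (F v).frame = ∅
  /-- (3) If the right side of a frame intersects a second frame, this right side
  intersects both the top and the bottom side of that second frame. -/
  right_cross : ∀ u v : V, u ≠ v →
    ((F u).rightSide ∩ (F v).frame).Nonempty →
    ((F u).rightSide ∩ (F v).topSide).Nonempty ∧
      ((F u).rightSide ∩ (F v).bottomSide).Nonempty
  /-- (4) If two frames intersect, no third frame is entirely contained in the
  intersection of the regions bounded by the two frames. -/
  not_nested : ∀ u v w : V, u ≠ v → w ≠ u → w ≠ v →
    ((F u).frame ∩ (F v).frame).Nonempty →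
    ¬ ((F w).frame ⊆ (F u).region ∩ (F v).region)

/-- A graph is a restricted frame graph if it admits a frame representation. -/
def IsRestrictedFrameGraph {V : Type} (G : SimpleGraph V) : Prop :=
  ∃ F : V → Box, IsFrameRepresentation G F

/-! ## Basic graph notions -/

/-- The closed neighborhood `N[u] = {u} ∪ N(u)`. -/
def closedNbhd {V : Type} (G : SimpleGraph V) (u : V) : Set V :=
  insert u (G.neighborSet u)

/-- `G` has a full star-cutset: for some vertex `u` the removal of `N[u]`
disconnects `G`. -/
def HasFullStarCutset {V : Type} (G : SimpleGraph V) : Prop :=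
  ∃ u : V, ¬ (G.induce ((closedNbhd G u)ᶜ)).Preconnected

/-- `v` is a cut-vertex of `G`: its removal disconnects `G`. -/
def IsCutVertex {V : Type} (G : SimpleGraph V) (v : V) : Prop :=
  ¬ (G.induce {u : V | u ≠ v}).Preconnected

/-- `G` is a path graph: its vertices can be enumerated `0, …, n-1` so that two
vertices are adjacent iff they are consecutive. -/
def IsPathGraph {V : Type} (G : SimpleGraph V) : Prop :=
  ∃ (n : ℕ) (e : V ≃ Fin n), ∀ u v : V,
    G.Adj u v ↔ ((e u : ℕ) + 1 = (e v : ℕ) ∨ (e v : ℕ) + 1 = (e u : ℕ))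

/-- `G` is a cycle graph (on at least 3 vertices). -/
def IsCycleGraphOn {V : Type} (G : SimpleGraph V) : Prop :=
  ∃ n : ℕ, 3 ≤ n ∧ ∃ e : V ≃ Fin n, ∀ u v : V,
    G.Adj u v ↔ (((e u : ℕ) + 1) % n = (e v : ℕ) ∨ ((e v : ℕ) + 1) % n = (e u : ℕ))

/-- `x` is a leaf of `T`: it has exactly one neighbor. -/
def IsLeaf {V : Type} (T : SimpleGraph V) (x : V) : Prop :=
  (T.neighborSet x).ncard = 1

/-- `G` is a chandelier with pivot `v`: `G - v` is a tree `T` and `v` is adjacent to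
exactly the leaves of `T`. -/
def IsChandelierWithPivot {V : Type} (G : SimpleGraph V) (v : V) : Prop :=
  (G.induce {u : V | u ≠ v}).IsTree ∧
    ∀ u : ↥{u : V | u ≠ v}, (G.Adj v u.val ↔ IsLeaf (G.induce {u : V | u ≠ v}) u)

/-- `G` is a chandelier. -/
def IsChandelier {V : Type} (G : SimpleGraph V) : Prop :=
  ∃ v : V, IsChandelierWithPivot G v

/-- `G` is a luxury chandelier: a chandelier (with pivot `v` and tree `T = G - v`)
such that the neighbor in `T` of each leaf of `T` has degree 2 in `T`. -/
def IsLuxuryChandelier {V : Type} (G : SimpleGraph V) : Prop :=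
  ∃ v : V, IsChandelierWithPivot G v ∧
    ∀ x y : ↥{u : V | u ≠ v}, (G.induce {u : V | u ≠ v}).Adj x y →
      IsLeaf (G.induce {u : V | u ≠ v}) x →
      ((G.induce {u : V | u ≠ v}).neighborSet y).ncard = 2

/-! ## Multigraphs and subdivisions -/

/-- A loopless multigraph on vertex set `V`: a symmetric multiplicity function. -/
structure Multigraph (V : Type) where
  m : V → V → ℕ
  symm : ∀ u v : V, m u v = m v u
  loopless : ∀ v : V, m v v = 0

/-- The multigraph associated with a simple graph (each edge has multiplicity 1). -/
noncomputable def SimpleGraph.toMultigraph {V : Type} (G : SimpleGraph V) : Multigraph V where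
  m u v := @ite ℕ (G.Adj u v) (Classical.dec _) 1 0
  symm u v := by
    beta_reduce
    by_cases h : G.Adj u v
    · rw [if_pos h, if_pos (G.symm.symm _ _ h)]
    · rw [if_neg h, if_neg (fun h' => h (G.symm.symm _ _ h'))]
  loopless v := by
    beta_reduce
    rw [if_neg (G.loopless.irrefl v)]

/-- The interior (set of internal vertices) of a walk. -/
def walkInterior {V : Type} {G : SimpleGraph V} {a b : V} (p : G.Walk a b) : Set V :=
  {w : V | w ∈ p.support ∧ w ≠ a ∧ w ≠ b}

/-- A witness that the simple graph `H` is a `≥k`-subdivision of the multigraph `G`: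
each edge of `G` (counted with multiplicity) is replaced by a path with at least
`k+1` edges between (the images of) its endpoints, these paths being internally
disjoint from each other and from the branch vertices, and covering all of `H`. -/
structure MultiSubdivision {V W : Type} (G : Multigraph V) (H : SimpleGraph W) (k : ℕ) where
  /-- the embedding of branch vertices -/
  f : V ↪ W
  /-- the path replacing the `i`-th parallel edge between `u` and `v` -/
  path : ∀ u v : V, Fin (G.m u v) → H.Walk (f u) (f v)
  path_symm : ∀ (u v : V) (i : Fin (G.m u v)),
    path v u (Fin.cast (G.symm u v) i) = (path u v i).reverse
  path_ne : ∀ (u v : V) (i i' : Fin (G.m u v)), (i : ℕ) ≠ (i' : ℕ) →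
    path u v i ≠ path u v i'
  isPath : ∀ (u v : V) (i : Fin (G.m u v)), (path u v i).IsPath
  length_le : ∀ (u v : V) (i : Fin (G.m u v)), k + 1 ≤ (path u v i).length
  /-- the paths are internally disjoint from the branch vertices -/
  interior_avoid : ∀ (u v : V) (i : Fin (G.m u v)) (x : V),
    f x ∉ walkInterior (path u v i)
  /-- distinct paths are pairwise internally disjoint -/
  interior_disjoint : ∀ (u v : V) (i : Fin (G.m u v)) (u' v' : V) (i' : Fin (G.m u' v')),
    (walkInterior (path u v i) ∩ walkInterior (path u' v' i')).Nonempty →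
    (u = u' ∧ v = v' ∧ (i : ℕ) = (i' : ℕ)) ∨ (u = v' ∧ v = u' ∧ (i : ℕ) = (i' : ℕ))
  /-- every vertex of `H` is a branch vertex or an internal vertex of a path -/
  vertex_cover : ∀ w : W, (∃ x : V, f x = w) ∨
    ∃ (u v : V) (i : Fin (G.m u v)), w ∈ walkInterior (path u v i)
  /-- every edge of `H` lies on one of the paths -/
  edge_cover : ∀ e ∈ H.edgeSet, ∃ (u v : V) (i : Fin (G.m u v)), e ∈ (path u v i).edges

/-- `H` is a `≥k`-subdivision of the multigraph `G`. -/
def IsSubdivisionGE {V W : Type} (G : Multigraph V) (k : ℕ) (H : SimpleGraph W) : Prop :=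
  Nonempty (MultiSubdivision G H k)

/-- `H` is a subdivision of the simple graph `G` (every edge is replaced by a path
with at least one edge). -/
def IsSubdivision {V W : Type} (G : SimpleGraph V) (H : SimpleGraph W) : Prop :=
  IsSubdivisionGE G.toMultigraph 0 H

namespace Multigraph

/-- The underlying simple graph of a multigraph. -/
def support {V : Type} (G : Multigraph V) : SimpleGraph V where
  Adj u v := 0 < G.m u v
  symm := by
    refine ⟨?_⟩
    intro u v h
    rw [G.symm v u]
    exact h
  loopless := by
    refine ⟨?_⟩
    intro v h
    rw [G.loopless v] at h
    exact Nat.lt_irrefl 0 h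

/-- A multigraph is connected if its underlying simple graph is. -/
def Connected {V : Type} (G : Multigraph V) : Prop :=
  G.support.Connected

/-- A multigraph is 2-connected if it is connected, has at least two vertices, and
deleting any single vertex leaves it connected. -/
def TwoConnected {V : Type} (G : Multigraph V) : Prop :=
  G.support.Connected ∧ (∃ u v : V, u ≠ v) ∧
    ∀ v : V, (G.support.induce {u : V | u ≠ v}).Connected

/-- `v` is a feedback vertex of the multigraph `G`: `G - v` contains no cycle
(where a pair of parallel edges forms a cycle of length 2). -/
def IsFeedbackVertex {V : Type} (G : Multigraph V) (v : V) : Prop :=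
  (G.support.induce {u : V | u ≠ v}).IsAcyclic ∧
    ∀ u w : V, u ≠ v → w ≠ v → G.m u w ≤ 1

end Multigraph

/-! ## Induced cycles and big vertices -/

/-- `C` induces a cycle in `G`. -/
def IsInducedCycle {V : Type} (G : SimpleGraph V) (C : Set V) : Prop :=
  IsCycleGraphOn (G.induce C)

/-- `v` is a big vertex of the (induced cycle on) `C` with respect to the frame
representation `F`: `v ∈ C` and `F v` contains the frame of every vertex of `C`
outside `N[v]`. -/
def IsBigVertexOf {V : Type} (G : SimpleGraph V) (F : V → Box) (C : Set V) (v : V) : Prop :=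
  v ∈ C ∧ ∀ u ∈ C, u ≠ v → ¬ G.Adj v u → Box.Inside (F u) (F v)

/-- `v` is a big vertex of the representation `F`: it is a big vertex of some
induced cycle of `G`. -/
def IsBigVertex {V : Type} (G : SimpleGraph V) (F : V → Box) (v : V) : Prop :=
  ∃ C : Set V, IsInducedCycle G C ∧ IsBigVertexOf G F C v

/-! ## Gluing a chandelier onto a vertex -/

/-- The graph obtained from the disjoint union of `G₁` and `G₂` by identifying the
vertex `v` of `G₁` with the vertex `p` of `G₂`. -/
def glueAt {V₁ V₂ : Type} (G₁ : SimpleGraph V₁) (G₂ : SimpleGraph V₂) (v : V₁) (p : V₂) :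
    SimpleGraph (V₁ ⊕ {x : V₂ // x ≠ p}) :=
  SimpleGraph.fromRel (fun a b =>
    match a, b with
    | Sum.inl u, Sum.inl w => G₁.Adj u w
    | Sum.inr u, Sum.inr w => G₂.Adj u.val w.val
    | Sum.inl u, Sum.inr w => u = v ∧ G₂.Adj p w.val
    | Sum.inr _, Sum.inl _ => False)

/-! ## The multigraphs `Ĥ₁` and `Ĥ₂` -/

/-- The multiplicity matrix of `Ĥ₁` (vertices `a₁ = 0`, `b₁ = 1`, `v₁ = 2`, `v₂ = 3`,
`a₂ = 4`, `b₂ = 5`). -/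
def H1hatMatrix : Matrix (Fin 6) (Fin 6) ℕ :=
  !![0, 2, 1, 0, 0, 0;
     2, 0, 1, 0, 0, 0;
     1, 1, 0, 1, 0, 0;
     0, 0, 1, 0, 1, 1;
     0, 0, 0, 1, 0, 2;
     0, 0, 0, 1, 2, 0]

/-- The multigraph `Ĥ₁`: two disjoint digons `a₁b₁`, `a₂b₂`, and single edges
`a₁v₁`, `b₁v₁`, `v₁v₂`, `a₂v₂`, `b₂v₂`. -/
def H1hat : Multigraph (Fin 6) where
  m u v := H1hatMatrix u v
  symm := by
    intro u v
    fin_cases u <;> fin_cases v <;> first | rfl | decide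
  loopless := by decide

/-- The multiplicity matrix of `Ĥ₂` (vertices `a₁ = 0`, `b₁ = 1`, `v = 2`,
`a₂ = 3`, `b₂ = 4`). -/
def H2hatMatrix : Matrix (Fin 5) (Fin 5) ℕ :=
  !![0, 2, 1, 0, 0;
     2, 0, 1, 0, 0;
     1, 1, 0, 1, 1;
     0, 0, 1, 0, 2;
     0, 0, 1, 2, 0]

/-- The multigraph `Ĥ₂`: two digons `a₁b₁`, `a₂b₂`, and single edges
`a₁v`, `b₁v`, `a₂v`, `b₂v`. -/
def H2hat : Multigraph (Fin 5) where
  m u v := H2hatMatrix u v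
  symm := by
    intro u v
    fin_cases u <;> fin_cases v <;> first | rfl | decide
  loopless := by decide

/-! ## Subdivisions of `K₄` and their type -/

/-- The complete graph on four vertices. -/
def K4 : SimpleGraph (Fin 4) := ⊤

/-- The set of edges of `K₄` that are subdivided at least once in the subdivision
witnessed by `S` (i.e. replaced by a path with at least two edges). -/
def subdividedEdges {W : Type} {H : SimpleGraph W}
    (S : MultiSubdivision K4.toMultigraph H 0) : Set (Sym2 (Fin 4)) :=
  {e : Sym2 (Fin 4) | ∃ (u v : Fin 4) (i : Fin (K4.toMultigraph.m u v)),
    e = s(u, v) ∧ 2 ≤ (S.path u v i).length}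

/-! ## Adding a twin -/

/-- The graph obtained from `G` by adding a twin of `v`: a new vertex, non-adjacent
to `v`, whose neighborhood is exactly `N(v)`. -/
def addTwin {V : Type} (G : SimpleGraph V) (v : V) : SimpleGraph (V ⊕ Unit) :=
  SimpleGraph.fromRel (fun a b =>
    match a, b with
    | Sum.inl u, Sum.inl w => G.Adj u w
    | Sum.inr _, Sum.inl u => G.Adj v u
    | _, _ => False)

/-! ## The construction of Burling and Pawlik et al. -/

/-- A graph-stable set pair: a graph together with a collection of sets of vertices
(intended: stable sets). -/
structure GSPair : Type 1 where
  V : Type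
  G : SimpleGraph V
  S : Set (Set V)

namespace GSPair

/-- The vertex type of `next P`: the original vertices, the vertices `(s, u)` of the
copy `H_s` of the graph for each `s ∈ 𝒮`, and the new vertices `v_{s,t}`. -/
abbrev nextVertex (P : GSPair) : Type :=
  P.V ⊕ ((↥P.S × P.V) ⊕ (↥P.S × ↥P.S))

/-- The adjacency generator for the graph of `next P`. -/
def nextRel (P : GSPair) : P.nextVertex → P.nextVertex → Prop
  | Sum.inl u, Sum.inl v => P.G.Adj u v
  | Sum.inr (Sum.inl (s, u)), Sum.inr (Sum.inl (t, v)) => s = t ∧ P.G.Adj u v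
  | Sum.inr (Sum.inr (s, t)), Sum.inr (Sum.inl (s', v)) => s = s' ∧ v ∈ (t : Set P.V)
  | _, _ => False

/-- The procedure `next`: add a disjoint copy `H_s` of the graph for each `s ∈ 𝒮`, a
vertex `v_{s,t}` whose neighborhood is exactly the copy of `t` inside `H_s` for all
`s, t ∈ 𝒮`, and take as new collection of stable sets all `s ∪ t_s` and
`s ∪ {v_{s,t}}`. -/
def next (P : GSPair) : GSPair where
  V := P.nextVertex
  G := SimpleGraph.fromRel P.nextRel
  S := {A : Set P.nextVertex | ∃ s t : ↥P.S,
    A = (Sum.inl '' (s : Set P.V) : Set P.nextVertex) ∪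
        ((fun u : P.V => (Sum.inr (Sum.inl (s, u)) : P.nextVertex)) '' (t : Set P.V)) ∨
    A = (Sum.inl '' (s : Set P.V) : Set P.nextVertex) ∪ {Sum.inr (Sum.inr (s, t))}}

/-- The starting pair: a single vertex, with the single stable set consisting of
that vertex. -/
def base : GSPair := ⟨PUnit, ⊥, {Set.univ}⟩

/-- `P` is an induced subgraph-stable set pair of `Q`. -/
def IsInducedSubpair (P Q : GSPair) : Prop :=
  ∃ f : P.V ↪ Q.V, (∀ u v : P.V, P.G.Adj u v ↔ Q.G.Adj (f u) (f v)) ∧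
    ∀ A ∈ P.S, ∃ B ∈ Q.S, A = f ⁻¹' B

/-- A graph-stable set pair is constructible if it is an induced subgraph-stable set
pair of some iterate of `next` on the starting pair. -/
def Constructible (P : GSPair) : Prop :=
  ∃ i : ℕ, IsInducedSubpair P (next^[i] base)

end GSPair

/-!
If `v` is a cut-vertex, the components of `G - v` that meet the connected graph `G - N[v]` are
all the same component, so some component lies inside `N(v)`; as `N(v)` is independent, it is a
single pendant neighbour `w` of `v`. Such a `w` has no neighbour in `G - N[x]` for any other
neighbour `x` of `v`, so connectivity of `G - N[x]` forces `G - N[x] = {w}`; since `N(v)` is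
independent, `v` has at most one neighbour besides `w`. Starting from a vertex of degree one and
applying this twice walks along a path of at most four vertices that exhausts `G`.
-/

namespace SimpleGraph

variable {V : Type} {G : SimpleGraph V}

theorem Preconnected.mem_of_forall_adj_mem {W : Type} {H : SimpleGraph W} (hH : H.Preconnected)
    {S : Set W} (hS : ∀ x ∈ S, ∀ y, H.Adj x y → y ∈ S) {a : W} (ha : a ∈ S) (y : W) :
    y ∈ S := by
  obtain ⟨p⟩ := hH a y
  induction p with
  | nil => exact ha
  | cons h _ ih => exact ih (hS _ ha _ h)

theorem eq_of_forall_adj_notMem_of_induce_preconnected {S : Set V}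
    (hS : (G.induce S).Preconnected) {w y : V} (hw : w ∈ S) (hy : y ∈ S)
    (hwS : ∀ z, G.Adj w z → z ∉ S) : y = w :=
  congrArg Subtype.val <| hS.mem_of_forall_adj_mem (S := {⟨w, hw⟩})
    (by rintro x rfl z hz; exact absurd z.2 (hwS z hz)) rfl ⟨y, hy⟩

theorem Adj.eq_of_neighborSet_eq_singleton {w z c : V} (h : G.Adj w z)
    (hw : G.neighborSet w = {c}) : z = c :=
  (Set.ext_iff.mp hw z).mp h

theorem Walk.exists_adj_reachable_induce_ne {v : V} :
    ∀ {c : V} (_ : G.Walk c v) (hc : c ≠ v),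
      ∃ x, ∃ hx : G.Adj v x, (G.induce {u | u ≠ v}).Reachable ⟨c, hc⟩ ⟨x, hx.ne'⟩
  | _, .nil, hc => absurd rfl hc
  | c, .cons (v := d) h q, hc => by
    by_cases hd : d = v
    · subst hd
      exact ⟨c, h.symm, .rfl⟩
    · obtain ⟨x, hx, hdx⟩ := q.exists_adj_reachable_induce_ne hd
      exact ⟨x, hx, (induce_adj.2 h).reachable.trans hdx⟩

end SimpleGraph

open SimpleGraph

variable {V : Type} {G : SimpleGraph V}

theorem induce_compl_closedNbhd_preconnected (hnsc : ¬ HasFullStarCutset G) (u : V) :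
    (G.induce (closedNbhd G u)ᶜ).Preconnected :=
  not_not.mp fun h => hnsc ⟨u, h⟩

theorem eq_of_notMem_closedNbhd_of_neighborSet_eq_singleton (hnsc : ¬ HasFullStarCutset G)
    {w c x y : V} (hw : G.neighborSet w = {c}) (hcx : G.Adj c x) (hxw : x ≠ w)
    (hy : y ∉ closedNbhd G x) : y = w := by
  have hw_out : w ∉ closedNbhd G x := by
    rintro (rfl | hxw')
    · exact hxw rfl
    · exact hcx.ne (hxw'.symm.eq_of_neighborSet_eq_singleton hw).symm
  refine eq_of_forall_adj_notMem_of_induce_preconnected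
    (induce_compl_closedNbhd_preconnected hnsc x) hw_out hy fun z hz hz_out => hz_out ?_
  rw [hz.eq_of_neighborSet_eq_singleton hw]
  exact Or.inr hcx.symm

theorem eq_of_adj_of_neighborSet_eq_singleton (htf : G.CliqueFree 3) (hnsc : ¬ HasFullStarCutset G)
    {w c x y : V} (hw : G.neighborSet w = {c}) (hcx : G.Adj c x) (hcy : G.Adj c y)
    (hxw : x ≠ w) (hyw : y ≠ w) : x = y := by
  by_contra hxy
  refine hyw (eq_of_notMem_closedNbhd_of_neighborSet_eq_singleton hnsc hw hcx hxw ?_)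
  rintro (rfl | hxy')
  · exact hxy rfl
  · exact isIndepSet_neighborSet_of_triangleFree _ htf c hcx hcy hxy hxy'

theorem ncard_neighborSet_le_two_of_neighborSet_eq_singleton [Finite V] (htf : G.CliqueFree 3)
    (hnsc : ¬ HasFullStarCutset G) {w c : V} (hw : G.neighborSet w = {c}) :
    (G.neighborSet c).ncard ≤ 2 := by
  have hcw : w ∈ G.neighborSet c := G.adj_symm (hw ▸ rfl : c ∈ G.neighborSet w)
  have hle : (G.neighborSet c \ {w}).ncard ≤ 1 :=
    (Set.ncard_le_one_iff (Set.toFinite _)).mpr fun hx hy =>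
      eq_of_adj_of_neighborSet_eq_singleton htf hnsc hw hx.1 hy.1 hx.2 hy.2
  have := Set.ncard_sdiff_singleton_add_one hcw
  omega

theorem exists_neighborSet_eq_singleton_of_isCutVertex (hconn : G.Connected)
    (htf : G.CliqueFree 3) (hnsc : ¬ HasFullStarCutset G) {v : V} (hcut : IsCutVertex G v) :
    ∃ w, G.neighborSet w = {v} := by
  by_contra! hnone
  apply hcut
  have hsub : (closedNbhd G v)ᶜ ⊆ {u | u ≠ v} := by
    rintro z hz rfl
    exact hz (Set.mem_insert z _)
  have neighbor_reaches_outside : ∀ x (hx : G.Adj v x), ∃ z : ↥(closedNbhd G v)ᶜ,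
      (G.induce {u | u ≠ v}).Reachable ⟨x, hx.ne'⟩ (Set.inclusion hsub z) := by
    intro x hx
    obtain ⟨z, hxz, hzv⟩ : ∃ z, G.Adj x z ∧ z ≠ v := by
      by_contra! h
      exact hnone x (Set.eq_singleton_iff_unique_mem.mpr ⟨hx.symm, h⟩)
    have hz : z ∈ (closedNbhd G v)ᶜ := by
      rintro (rfl | hvz)
      · exact hzv rfl
      · exact isIndepSet_neighborSet_of_triangleFree _ htf x hx.symm hxz hzv.symm hvz
    exact ⟨⟨z, hz⟩, (induce_adj.2 hxz).reachable⟩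
  have reaches_outside : ∀ a : ↥{u | u ≠ v}, ∃ z : ↥(closedNbhd G v)ᶜ,
      (G.induce {u | u ≠ v}).Reachable a (Set.inclusion hsub z) := by
    rintro ⟨a, ha⟩
    obtain ⟨p⟩ := hconn.preconnected a v
    obtain ⟨x, hx, hax⟩ := p.exists_adj_reachable_induce_ne ha
    obtain ⟨z, hxz⟩ := neighbor_reaches_outside x hx
    exact ⟨z, hax.trans hxz⟩
  intro a b
  obtain ⟨za, ha⟩ := reaches_outside a
  obtain ⟨zb, hb⟩ := reaches_outside b
  exact ha.trans <|
    ((induce_compl_closedNbhd_preconnected hnsc v za zb).map (G.induceHomOfLE hsub).toHom).trans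
      hb.symm

variable (G) in
theorem isPathGraph_of_list [Fintype V] (l : List V) (hnd : l.Nodup) (hl : ∀ z, z ∈ l)
    (hadj : ∀ i j : Fin l.length, i < j → (G.Adj (l.get i) (l.get j) ↔ (i : ℕ) + 1 = j)) :
    IsPathGraph G ∧ Fintype.card V = l.length := by
  classical
  let e := hnd.getEquivOfForallMemList l hl
  refine ⟨⟨l.length, e.symm, fun u v => ?_⟩, by simpa using (Fintype.card_congr e).symm⟩
  obtain ⟨i, rfl⟩ := e.surjective u
  obtain ⟨j, rfl⟩ := e.surjective v
  rw [e.symm_apply_apply, e.symm_apply_apply]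
  change G.Adj (l.get i) (l.get j) ↔ _
  rcases lt_trichotomy i j with h | rfl | h
  · rw [hadj i j h]
    omega
  · simp
  · rw [G.adj_comm, hadj j i h]
    omega

theorem isPathGraph_of_neighborSet_eq_empty [Fintype V] (hconn : G.Connected) {v : V}
    (hv : G.neighborSet v = ∅) : IsPathGraph G ∧ Fintype.card V ≤ 4 := by
  have hl : ∀ z, z ∈ [v] := hconn.preconnected.mem_of_forall_adj_mem (S := {z | z ∈ [v]})
    (by
      intro z hz y hzy
      simp only [List.mem_singleton, Set.mem_ofPred_eq] at hz
      exact absurd (hz ▸ hzy : y ∈ G.neighborSet v) (hv ▸ Set.notMem_empty y))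
    (a := v) (by simp)
  have h := isPathGraph_of_list G [v] (List.nodup_singleton v) hl (by simp)
  exact ⟨h.1, by simp [h.2]⟩

theorem neighborSet_eq_pair_of_neighborSet_eq_singleton (htf : G.CliqueFree 3)
    (hnsc : ¬ HasFullStarCutset G) {w c x : V} (hw : G.neighborSet w = {c}) (hcx : G.Adj c x)
    (hxw : x ≠ w) : G.neighborSet c = {w, x} := by
  ext z
  refine ⟨fun hcz => ?_, ?_⟩
  · by_cases hzw : z = w
    · exact Or.inl hzw
    · exact Or.inr (eq_of_adj_of_neighborSet_eq_singleton htf hnsc hw hcz hcx hzw hxw)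
  · rintro (rfl | rfl)
    · exact G.adj_symm (hw ▸ rfl : c ∈ G.neighborSet z)
    · exact hcx

theorem neighborSet_eq_singleton_of_adj_of_neighborSet_eq_singleton (htf : G.CliqueFree 3)
    (hnsc : ¬ HasFullStarCutset G) {w c x u : V} (hw : G.neighborSet w = {c}) (hcx : G.Adj c x)
    (hxw : x ≠ w) (hxu : G.Adj x u) (huc : u ≠ c) : G.neighborSet u = {x} := by
  refine Set.eq_singleton_iff_unique_mem.mpr ⟨hxu.symm, fun z huz => ?_⟩
  by_contra hzx
  have hz : z ∉ closedNbhd G x := by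
    rintro (rfl | hxz)
    · exact hzx rfl
    · exact isIndepSet_neighborSet_of_triangleFree _ htf u hxu.symm huz (Ne.symm hzx) hxz
  have hzw := eq_of_notMem_closedNbhd_of_neighborSet_eq_singleton hnsc hw hcx hxw hz
  exact huc ((hzw ▸ huz.symm).eq_of_neighborSet_eq_singleton hw)

theorem isPathGraph_of_adj_of_neighborSet_eq_singleton [Fintype V] (htf : G.CliqueFree 3)
    (hnsc : ¬ HasFullStarCutset G) {v b x : V}
    (hv : G.neighborSet v = {b}) (hbx : G.Adj b x) (hxv : x ≠ v) :
    IsPathGraph G ∧ Fintype.card V ≤ 4 := by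
  have hvb : G.Adj v b := (hv ▸ rfl : b ∈ G.neighborSet v)
  have hvx : ¬ G.Adj v x := fun h => hbx.ne' (h.eq_of_neighborSet_eq_singleton hv)
  have hcover : ∀ z, z = v ∨ z = x ∨ G.Adj x z := fun z => by
    by_contra! h
    exact h.1 (eq_of_notMem_closedNbhd_of_neighborSet_eq_singleton hnsc hv hbx hxv
      (by rintro (h' | h'); exacts [h.2.1 h', h.2.2 h']))
  by_cases hx : G.neighborSet x = {b}
  · have hl : ∀ z, z ∈ [v, b, x] := fun z => by
      rcases hcover z with rfl | rfl | hz
      · simp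
      · simp
      · simp [hz.eq_of_neighborSet_eq_singleton hx]
    have h := isPathGraph_of_list G [v, b, x] (by simp [hvb.ne, hbx.ne, hxv.symm]) hl (by
      intro i j hij
      fin_cases i <;> fin_cases j <;> simp [hvb, hbx, hvx] at hij ⊢)
    exact ⟨h.1, by simp [h.2]⟩
  obtain ⟨u, hxu, hub⟩ : ∃ u, G.Adj x u ∧ u ≠ b := by
    by_contra! h
    exact hx (Set.eq_singleton_iff_unique_mem.mpr ⟨hbx.symm, h⟩)
  have hu := neighborSet_eq_singleton_of_adj_of_neighborSet_eq_singleton htf hnsc hv hbx hxv hxu hub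
  have hNx := neighborSet_eq_pair_of_neighborSet_eq_singleton htf hnsc hu hbx.symm hub.symm
  have hvu : ¬ G.Adj v u := fun h => hub (h.eq_of_neighborSet_eq_singleton hv)
  have hbu : ¬ G.Adj b u := isIndepSet_neighborSet_of_triangleFree _ htf x hbx.symm hxu hub.symm
  have huv : u ≠ v := fun h => hvx (h ▸ hxu).symm
  have hl : ∀ z, z ∈ [v, b, x, u] := fun z => by
    rcases hcover z with rfl | rfl | hz
    · simp
    · simp
    · rcases (Set.ext_iff.mp hNx z).mp hz with rfl | rfl <;> simp
  have h := isPathGraph_of_list G [v, b, x, u]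
    (by simp [hvb.ne, hbx.ne, hxv.symm, hxu.ne, hub.symm, huv.symm]) hl (by
      intro i j hij
      fin_cases i <;> fin_cases j <;> simp [hvb, hbx, hxu, hvx, hvu, hbu] at hij ⊢)
  exact ⟨h.1, by simp [h.2]⟩

theorem isPathGraph_of_neighborSet_eq_singleton [Fintype V] (hconn : G.Connected)
    (htf : G.CliqueFree 3) (hnsc : ¬ HasFullStarCutset G) {v b : V}
    (hv : G.neighborSet v = {b}) : IsPathGraph G ∧ Fintype.card V ≤ 4 := by
  have hvb : G.Adj v b := (hv ▸ rfl : b ∈ G.neighborSet v)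
  by_cases hb : G.neighborSet b = {v}
  · have hl : ∀ z, z ∈ [v, b] := hconn.preconnected.mem_of_forall_adj_mem
      (S := {z | z ∈ [v, b]}) (a := v) (by
        intro z hz y hzy
        simp only [List.mem_cons, List.not_mem_nil, or_false, Set.mem_ofPred_eq] at hz ⊢
        rcases hz with rfl | rfl
        · exact Or.inr (hzy.eq_of_neighborSet_eq_singleton hv)
        · exact Or.inl (hzy.eq_of_neighborSet_eq_singleton hb)) (by simp)
    have h := isPathGraph_of_list G [v, b] (by simp [hvb.ne]) hl (by
      intro i j hij
      fin_cases i <;> fin_cases j <;> simp [hvb] at hij ⊢)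
    exact ⟨h.1, by simp [h.2]⟩
  obtain ⟨x, hbx, hxv⟩ : ∃ x, G.Adj b x ∧ x ≠ v := by
    by_contra! h
    exact hb (Set.eq_singleton_iff_unique_mem.mpr ⟨hvb.symm, h⟩)
  exact isPathGraph_of_adj_of_neighborSet_eq_singleton htf hnsc hv hbx hxv

/-- Let `G` be a connected triangle-free graph with no full
star-cutset. Then `G` has no cut-vertex of degree at least 3; moreover, if `G` is
not a path on at most 4 vertices, then every vertex of `G` has degree at least 2. -/
theorem no_full_star_cutset_structure
    {V : Type} [Fintype V] (G : SimpleGraph V)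
    (hconn : G.Connected) (htf : G.CliqueFree 3) (hnsc : ¬ HasFullStarCutset G) :
    (∀ v : V, 3 ≤ (G.neighborSet v).ncard → ¬ IsCutVertex G v) ∧
      (¬ (IsPathGraph G ∧ Fintype.card V ≤ 4) →
        ∀ v : V, 2 ≤ (G.neighborSet v).ncard) := by
  refine ⟨fun v hdeg hcut => ?_, fun hpath v => ?_⟩
  · obtain ⟨w, hw⟩ := exists_neighborSet_eq_singleton_of_isCutVertex hconn htf hnsc hcut
    have := ncard_neighborSet_le_two_of_neighborSet_eq_singleton htf hnsc hw
    omega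
  · by_contra! hdeg
    apply hpath
    interval_cases h : (G.neighborSet v).ncard
    · exact isPathGraph_of_neighborSet_eq_empty hconn ((Set.ncard_eq_zero (Set.toFinite _)).mp h)
    · obtain ⟨b, hb⟩ := Set.ncard_eq_one.mp h
      exact isPathGraph_of_neighborSet_eq_singleton hconn htf hnsc hb
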